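/- In the pointwise r-gather algorithm, every cluster ever present in the maintained family has size at least r. -/

import Mathlib

/-- `u` and `v` are within graph distance `k` in `G`. -/
def withinDist {V : Type*} (G : SimpleGraph V) (k : ℕ) (u v : V) : Prop :=
  ∃ w : G.Walk u v, w.length ≤ k

/-- The subgraph of the `k`-th power of `G` induced by the vertex set `A`. -/
def inducedPower {V : Type*} (G : SimpleGraph V) (A : Set V) (k : ℕ) : SimpleGraph V where
  Adj u v := u ≠ v ∧ u ∈ A ∧ v ∈ A ∧ withinDist G k u v
  symm := by
    constructor
    rintro u v ⟨h1, h2, h3, w, hw⟩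
    exact ⟨h1.symm, h3, h2, w.reverse, by simpa using hw⟩
  loopless := by constructor; rintro u ⟨h1, -⟩; exact h1 rfl

/-!
A cluster is born in phase `i` only at a point `s` of the ruling set `S i ⊆ P''_i`, so the whole
closed neighborhood `Γ(s)`, which has at least `r` points, is unclustered at that moment and lies
within distance `1 ≤ 2β` of `s`. Each of its points therefore joins a nearest point of `S i`, at
distance at most `1`; two distinct points of `S i` are at distance at least `3`, since `S i` is
independent in the square of `G i`, so that nearest point is `s` itself. Clusters only grow
afterwards.
-/

section WithinDist

variable {V : Type*} {G : SimpleGraph V} {k m : ℕ} {u v w : V}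

theorem withinDist.mono (hkm : k ≤ m) (h : withinDist G k u v) : withinDist G m u v :=
  let ⟨p, hp⟩ := h
  ⟨p, hp.trans hkm⟩

theorem withinDist.symm (h : withinDist G k u v) : withinDist G k v u :=
  let ⟨p, hp⟩ := h
  ⟨p.reverse, by simpa using hp⟩

theorem withinDist.trans (huv : withinDist G k u v) (hvw : withinDist G m v w) :
    withinDist G (k + m) u w :=
  let ⟨p, hp⟩ := huv
  let ⟨q, hq⟩ := hvw
  ⟨p.append q, by simp only [SimpleGraph.Walk.length_append]; omega⟩

theorem withinDist_one_of_adj_or_eq (h : G.Adj u v ∨ v = u) : withinDist G 1 v u := by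
  rcases h with h | rfl
  · exact ⟨.cons h.symm .nil, by simp⟩
  · exact ⟨.nil, by simp⟩

end WithinDist

section Phase

variable {X : Type*}

theorem mem_of_new_center {A B S : Finset X} {f g : X → Option X} {p s : X}
    (hassign : ∀ q ∈ A, ∃ t ∈ S, g q = some t)
    (hjoin : ∀ q ∈ B, f q = none → q ∉ A → ∃ q', g q = f q')
    (hkeep : ∀ q t, f q = some t → g q = some t)
    (hrest : ∀ q, f q = none → q ∉ A → q ∉ B → g q = none)
    (hp : g p = some s) (hnew : ∀ q, f q ≠ some s) : s ∈ S := by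
  cases hfp : f p with
  | some t =>
    obtain rfl : t = s := Option.some_inj.mp ((hkeep p t hfp).symm.trans hp)
    exact absurd hfp (hnew p)
  | none =>
    by_cases hpA : p ∈ A
    · obtain ⟨t, htS, hgp⟩ := hassign p hpA
      rwa [Option.some_inj.mp (hp.symm.trans hgp)]
    by_cases hpB : p ∈ B
    · obtain ⟨q, hq⟩ := hjoin p hpB hfp hpA
      exact absurd (hq.symm.trans hp) (hnew q)
    · simp [hrest p hfp hpA hpB] at hp

theorem eq_some_of_withinDist_one {G : SimpleGraph X} {T : Set X} {S : Finset X}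
    {g : X → Option X} {q s : X} (hST : ∀ t ∈ S, t ∈ T)
    (hindep : ∀ t ∈ S, ∀ t' ∈ S, t ≠ t' → ¬ (inducedPower G T 2).Adj t t')
    (hnearest :
      ∃ t ∈ S, g q = some t ∧ ∀ t' ∈ S, withinDist G 1 q t' → withinDist G 1 q t)
    (hs : s ∈ S) (hqs : withinDist G 1 q s) : g q = some s := by
  obtain ⟨t, htS, hgq, hmin⟩ := hnearest
  obtain rfl : s = t := by
    by_contra hst
    exact hindep s hs t htS hst ⟨hst, hST s hs, hST t htS, hqs.symm.trans (hmin s hs hqs)⟩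
  exact hgq

end Phase

open Classical in
/-- Clusters are the fibers of the partial center assignment `c i`. -/
theorem stmt12_general {X : Type*} (P : Finset X) (r : ℕ) (β : ℕ) (hβ : 1 ≤ β)
    (G : ℕ → SimpleGraph X)
    (c : ℕ → X → Option X)
    (Pp Ppp Pppp : ℕ → Finset X) (S : ℕ → Finset X)
    -- `P'_i`: vertices with at least `r` vertices in their closed `G i`-neighborhood
    (hPp : ∀ i, Pp i = P.filter fun p =>
      r ≤ (P.filter fun q => (G i).Adj p q ∨ q = p).card)
    -- `P''_i`: vertices of `P'_i` whose closed neighborhood is entirely unclustered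
    (hPpp : ∀ i, Ppp i = (Pp i).filter fun p =>
      ∀ q ∈ P, ((G i).Adj p q ∨ q = p) → c i q = Option.none)
    -- `S i` is a `β`-ruling set of `(G_i²)[P''_i]`
    (hS1 : ∀ i, S i ⊆ Ppp i)
    (hS2 : ∀ i, ∀ s ∈ S i, ∀ s' ∈ S i, s ≠ s' →
      ¬ (inducedPower (G i) (↑(Ppp i)) 2).Adj s s')
    -- `P'''_i`: unclustered points at `G i`-distance at most `2β` from `S i`
    (hPppp : ∀ i, Pppp i = P.filter fun p =>
      c i p = Option.none ∧ ∃ s ∈ S i, withinDist (G i) (2 * β) p s)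
    -- no point is clustered initially, and points outside `P` are never clustered
    (hinit : ∀ p, c 0 p = Option.none)
    -- each point of `P'''_i` joins the cluster of a closest member of `S i`
    (hU2 : ∀ i, ∀ p ∈ Pppp i, ∃ s ∈ S i, c (i + 1) p = some s ∧
      withinDist (G i) (2 * β) p s ∧
      ∀ s' ∈ S i, ∀ m : ℕ, withinDist (G i) m p s' → withinDist (G i) m p s)
    -- each unclustered point of `P'_i \ P'''_i` joins an adjacent existing cluster
    (hU3 : ∀ i, ∀ p ∈ Pp i, c i p = Option.none → p ∉ Pppp i →
      ∃ q ∈ P, (G i).Adj p q ∧ (c i q).isSome ∧ c (i + 1) p = c i q)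
    -- already clustered points keep their centers
    (hU4 : ∀ i p s, c i p = some s → c (i + 1) p = some s)
    -- no other point is clustered in phase `i`
    (hU5 : ∀ i p, c i p = Option.none → p ∉ Pppp i → p ∉ Pp i →
      c (i + 1) p = Option.none) :
    ∀ i, ∀ s : X, (∃ p, c i p = some s) →
      r ≤ (P.filter fun q => c i q = some s).card := by
  intro i
  induction i with
  | zero => simp [hinit]
  | succ i ih =>
    rintro s ⟨p, hp⟩
    by_cases hold : ∃ p, c i p = some s
    · refine (ih s hold).trans (Finset.card_le_card fun q hq => ?_)
      simp only [Finset.mem_filter] at hq ⊢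
      exact ⟨hq.1, hU4 i q s hq.2⟩
    have hsS : s ∈ S i :=
      mem_of_new_center (fun q hq => (hU2 i q hq).imp fun _ h => ⟨h.1, h.2.1⟩)
        (fun q hq hcq hq' => (hU3 i q hq hcq hq').imp fun _ h => h.2.2.2) (hU4 i) (hU5 i) hp
        (not_exists.mp hold)
    have hsPpp := hS1 i hsS
    simp only [hPpp, hPp, Finset.mem_filter] at hsPpp
    obtain ⟨⟨-, hΓ⟩, hΓfree⟩ := hsPpp
    refine hΓ.trans (Finset.card_le_card fun q hq => ?_)
    simp only [Finset.mem_filter] at hq ⊢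
    have hqs := withinDist_one_of_adj_or_eq hq.2
    have hqPppp : q ∈ Pppp i := by
      rw [hPppp]
      exact Finset.mem_filter.mpr ⟨hq.1, hΓfree q hq.1 hq.2, s, hsS, hqs.mono (by omega)⟩
    refine ⟨hq.1, eq_some_of_withinDist_one (fun t ht => Finset.mem_coe.mpr (hS1 i ht)) (hS2 i)
      ?_ hsS hqs⟩
    exact (hU2 i q hqPppp).imp fun _ ⟨htS, hcq, _, hmin⟩ =>
      ⟨htS, hcq, fun t' ht' => hmin t' ht' 1⟩

open Classical in
/-- Pointwise `r`-gather algorithm (Algorithm 4), size invariant: at any time of the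
algorithm, every cluster present in the maintained family has size at least `r`.
Clusters are the fibers of the partial center assignment `c i`. -/
theorem stmt12 {X : Type*} [MetricSpace X]
    (P : Finset X) (r : ℕ) (hr : 1 ≤ r)
    (C : ℝ) (hC : 1 ≤ C) (β : ℕ) (hβ : 1 ≤ β) (δ : ℝ) (hδ : 0 < δ)
    (G : ℕ → SimpleGraph X)
    (c : ℕ → X → Option X)
    (Pp Ppp Pppp : ℕ → Finset X) (S : ℕ → Finset X)
    -- `G i` is a `C`-approximate `(R_i, r)`-near neighbor graph of `P`
    (hGP : ∀ i p q, (G i).Adj p q → p ∈ P ∧ q ∈ P)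
    (hG1 : ∀ i p q, (G i).Adj p q → dist p q ≤ C * (2 ^ i * δ))
    (hG2 : ∀ i, ∀ p ∈ P,
      r ≤ (P.filter fun q => (G i).Adj p q ∨ q = p).card ∨
      ∀ q ∈ P, dist p q ≤ 2 ^ i * δ → ((G i).Adj p q ∨ q = p))
    -- `P'_i`: vertices with at least `r` vertices in their closed `G i`-neighborhood
    (hPp : ∀ i, Pp i = P.filter fun p =>
      r ≤ (P.filter fun q => (G i).Adj p q ∨ q = p).card)
    -- `P''_i`: vertices of `P'_i` whose closed neighborhood is entirely unclustered
    (hPpp : ∀ i, Ppp i = (Pp i).filter fun p =>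
      ∀ q ∈ P, ((G i).Adj p q ∨ q = p) → c i q = Option.none)
    -- `S i` is a `β`-ruling set of `(G_i²)[P''_i]`
    (hS1 : ∀ i, S i ⊆ Ppp i)
    (hS2 : ∀ i, ∀ s ∈ S i, ∀ s' ∈ S i, s ≠ s' →
      ¬ (inducedPower (G i) (↑(Ppp i)) 2).Adj s s')
    (hS3 : ∀ i, ∀ p ∈ Ppp i, ∃ s ∈ S i,
      withinDist (inducedPower (G i) (↑(Ppp i)) 2) β p s)
    -- `P'''_i`: unclustered points at `G i`-distance at most `2β` from `S i`
    (hPppp : ∀ i, Pppp i = P.filter fun p =>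
      c i p = Option.none ∧ ∃ s ∈ S i, withinDist (G i) (2 * β) p s)
    -- no point is clustered initially, and points outside `P` are never clustered
    (hinit : ∀ p, c 0 p = Option.none)
    (hout : ∀ i p, p ∉ P → c i p = Option.none)
    -- phase `i`: each point of `S i` becomes the center of a new cluster
    (hU1 : ∀ i, ∀ s ∈ S i, c (i + 1) s = some s)
    -- each point of `P'''_i` joins the cluster of a closest member of `S i`
    (hU2 : ∀ i, ∀ p ∈ Pppp i, ∃ s ∈ S i, c (i + 1) p = some s ∧
      withinDist (G i) (2 * β) p s ∧
      ∀ s' ∈ S i, ∀ m : ℕ, withinDist (G i) m p s' → withinDist (G i) m p s)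
    -- each unclustered point of `P'_i \ P'''_i` joins an adjacent existing cluster
    (hU3 : ∀ i, ∀ p ∈ Pp i, c i p = Option.none → p ∉ Pppp i →
      ∃ q ∈ P, (G i).Adj p q ∧ (c i q).isSome ∧ c (i + 1) p = c i q)
    -- already clustered points keep their centers
    (hU4 : ∀ i p s, c i p = some s → c (i + 1) p = some s)
    -- no other point is clustered in phase `i`
    (hU5 : ∀ i p, c i p = Option.none → p ∉ Pppp i → p ∉ Pp i →
      c (i + 1) p = Option.none) :
    ∀ i, ∀ s : X, (∃ p, c i p = some s) →
      r ≤ (P.filter fun q => c i q = some s).card :=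
  stmt12_general P r β hβ G c Pp Ppp Pppp S hPp hPpp hS1 hS2 hPppp hinit hU2 hU3 hU4 hU5
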